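/- arXiv:1804.03460 — 6 statements merged into one kernel-verified Lean document; each statement's English description precedes it below -/
import Mathlib

section
/- Let (E, M) be an orthogonal factorisation system on a category C, let S and T be monads on C, and let m : S → T be a monad morphism. Suppose E is closed under S (i.e. for every morphism e in E, S(e) is again in E). Then there exist a monad S' on C and monad morphisms e : S → S' and m' : S' → T such that m' ∘ e = m, every component e_X lies in E, every component m'_X lies in M, and moreover E is closed under S'. -/
open CategoryTheory

universe v u

/-- An orthogonal factorisation system on a category `C`. -/
structure IsOFS {C : Type u} [Category.{v} C] (E M : MorphismProperty C) : Prop where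
  comp_E : ∀ {X Y Z : C} (f : X ⟶ Y) (g : Y ⟶ Z), E f → E g → E (f ≫ g)
  comp_M : ∀ {X Y Z : C} (f : X ⟶ Y) (g : Y ⟶ Z), M f → M g → M (f ≫ g)
  iso_E : ∀ {X Y : C} (f : X ⟶ Y), IsIso f → E f
  iso_M : ∀ {X Y : C} (f : X ⟶ Y), IsIso f → M f
  exists_fac : ∀ {X Y : C} (f : X ⟶ Y),
      ∃ (A : C) (e : X ⟶ A) (m : A ⟶ Y), E e ∧ M m ∧ e ≫ m = f
  fillin : ∀ {W X Y Z : C} (e : W ⟶ X) (m : Y ⟶ Z) (f : W ⟶ Y) (g : X ⟶ Z),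
      E e → M m → f ≫ m = e ≫ g → ∃! h : X ⟶ Y, e ≫ h = f ∧ h ≫ m = g

/-!
Factor every component of `m` as `m_X = e_X ≫ p_X` with `e_X ∈ E` and `p_X ∈ M`. Unique
diagonal fillers make `X ↦ S' X` a functor with `e` and `p` natural. Since `S` preserves `E`,
the horizontal composite `e ◫ e : S S ⟶ S' S'` has components in `E`, so the multiplication
of `S'` is the filler of the square formed by `μ^S` and `μ^T`. Each monad law is an equation
between maps into some `S' X`, and such maps are determined by their precomposite with an
`E`-map and their composite with `p_X`. Finally `S'` preserves `E` by right cancellation in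
`E`, as `e_X ≫ S' f = S f ≫ e_Y`.
-/

namespace IsOFS

variable {C : Type u} [Category.{v} C] {E M : MorphismProperty C}

theorem hom_ext (h : IsOFS E M) {W X Y Z : C} {e : W ⟶ X} {p : Y ⟶ Z} (he : E e) (hp : M p)
    {a b : X ⟶ Y} (h₁ : e ≫ a = e ≫ b) (h₂ : a ≫ p = b ≫ p) : a = b :=
  (h.fillin e p (e ≫ a) (b ≫ p) he hp (by rw [Category.assoc, h₂])).unique ⟨rfl, h₂⟩
    ⟨h₁.symm, rfl⟩

theorem isIso_of_E_comp (h : IsOFS E M) {X Y Z : C} {e : X ⟶ Y} {p : Y ⟶ Z} (he : E e)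
    (hp : M p) (hep : E (e ≫ p)) : IsIso p := by
  obtain ⟨s, ⟨hs₁, hs₂⟩, -⟩ := h.fillin (e ≫ p) p e (𝟙 Z) hep hp (by simp)
  exact ⟨s, h.hom_ext he hp (by simpa using hs₁) (by simp [hs₂]), hs₂⟩

theorem E_of_precomp (h : IsOFS E M) {X Y Z : C} {u : X ⟶ Y} {v : Y ⟶ Z} (hu : E u)
    (huv : E (u ≫ v)) : E v := by
  obtain ⟨A, e, p, he, hp, rfl⟩ := h.exists_fac v
  have := h.isIso_of_E_comp (h.comp_E u e hu he) hp (by simpa using huv)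
  exact h.comp_E e p he (h.iso_E p this)

theorem E_hcomp_app (h : IsOFS E M) {D : Type*} [Category D] {F G : D ⥤ C} {H I : C ⥤ C}
    {α : F ⟶ G} {β : H ⟶ I} (hα : ∀ X, E (α.app X)) (hβ : ∀ X, E (β.app X))
    (hH : ∀ {X Y : C} (f : X ⟶ Y), E f → E (H.map f)) (X : D) : E ((α ◫ β).app X) := by
  rw [NatTrans.hcomp_app, ← β.naturality]
  exact h.comp_E _ _ (hH _ (hα X)) (hβ _)

theorem E_map_of_E_app (h : IsOFS E M) {D : Type*} [Category D] {P : MorphismProperty D}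
    {F G : D ⥤ C} {α : F ⟶ G} (hα : ∀ X, E (α.app X))
    (hF : ∀ {X Y : D} (f : X ⟶ Y), P f → E (F.map f)) {X Y : D} {f : X ⟶ Y} (hf : P f) :
    E (G.map f) :=
  h.E_of_precomp (hα X) <| by
    rw [← α.naturality]
    exact h.comp_E _ _ (hF f hf) (hα Y)

section lift

variable (h : IsOFS E M) {W X Y Z : C} {e : W ⟶ X} {p : Y ⟶ Z} (he : E e) (hp : M p)
  (f : W ⟶ Y) (g : X ⟶ Z) (sq : f ≫ p = e ≫ g)

noncomputable def lift : X ⟶ Y :=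
  (h.fillin e p f g he hp sq).exists.choose

@[simp]
theorem fac_left : e ≫ h.lift he hp f g sq = f :=
  (h.fillin e p f g he hp sq).exists.choose_spec.1

@[simp]
theorem fac_right : h.lift he hp f g sq ≫ p = g :=
  (h.fillin e p f g he hp sq).exists.choose_spec.2

@[simp]
theorem fac_left_assoc {V : C} (k : Y ⟶ V) : e ≫ h.lift he hp f g sq ≫ k = f ≫ k := by
  rw [← Category.assoc, fac_left]

@[simp]
theorem fac_right_assoc {V : C} (k : Z ⟶ V) : h.lift he hp f g sq ≫ p ≫ k = g ≫ k := by
  rw [← Category.assoc, fac_right]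

end lift

section natLift

variable (h : IsOFS E M) {D : Type*} [Category D] {F G H K : D ⥤ C} {ε : F ⟶ G} {π : H ⟶ K}
  (hε : ∀ X, E (ε.app X)) (hπ : ∀ X, M (π.app X)) (a : F ⟶ H) (b : G ⟶ K)
  (sq : ∀ X, a.app X ≫ π.app X = ε.app X ≫ b.app X)

noncomputable def natLift : G ⟶ H where
  app X := h.lift (hε X) (hπ X) (a.app X) (b.app X) (sq X)
  naturality X Y f := h.hom_ext (hε X) (hπ Y)
    (by rw [← ε.naturality_assoc]; simp only [fac_left, fac_left_assoc]; exact a.naturality f)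
    (by
      simp only [Category.assoc, π.naturality, fac_right, fac_right_assoc]
      exact b.naturality f)

theorem natLift_fac_left_app_assoc (X : D) {Z : C} (k : H.obj X ⟶ Z) :
    ε.app X ≫ (h.natLift hε hπ a b sq).app X ≫ k = a.app X ≫ k :=
  h.fac_left_assoc (hε X) (hπ X) _ _ (sq X) k

theorem natLift_fac_right_app_assoc (X : D) {Z : C} (k : K.obj X ⟶ Z) :
    (h.natLift hε hπ a b sq).app X ≫ π.app X ≫ k = b.app X ≫ k :=
  h.fac_right_assoc (hε X) (hπ X) _ _ (sq X) k

end natLift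

section image

variable (h : IsOFS E M) {X Y : C} (f : X ⟶ Y)

noncomputable def image : C := (h.exists_fac f).choose

noncomputable def toImage : X ⟶ h.image f := (h.exists_fac f).choose_spec.choose

noncomputable def fromImage : h.image f ⟶ Y :=
  (h.exists_fac f).choose_spec.choose_spec.choose

theorem E_toImage : E (h.toImage f) :=
  (h.exists_fac f).choose_spec.choose_spec.choose_spec.1

theorem M_fromImage : M (h.fromImage f) :=
  (h.exists_fac f).choose_spec.choose_spec.choose_spec.2.1

@[simp]
theorem toImage_fromImage : h.toImage f ≫ h.fromImage f = f :=
  (h.exists_fac f).choose_spec.choose_spec.choose_spec.2.2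

@[simp]
theorem toImage_fromImage_assoc {Z : C} (k : Y ⟶ Z) :
    h.toImage f ≫ h.fromImage f ≫ k = f ≫ k := by
  rw [← Category.assoc, toImage_fromImage]

end image

section imageFunctor

variable (h : IsOFS E M) {D : Type*} [Category D] {F G : D ⥤ C} (α : F ⟶ G)

noncomputable def imageFunctor : D ⥤ C where
  obj X := h.image (α.app X)
  map {X Y} f := h.lift (h.E_toImage _) (h.M_fromImage _) (F.map f ≫ h.toImage (α.app Y))
    (h.fromImage (α.app X) ≫ G.map f) (by simp)
  map_id X := h.hom_ext (h.E_toImage _) (h.M_fromImage _) (by simp) (by simp)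
  map_comp f g := h.hom_ext (h.E_toImage _) (h.M_fromImage _) (by simp) (by simp)

noncomputable def toImageFunctor : F ⟶ h.imageFunctor α where
  app X := h.toImage (α.app X)
  naturality _ _ _ := by simp [imageFunctor]

noncomputable def fromImageFunctor : h.imageFunctor α ⟶ G where
  app X := h.fromImage (α.app X)
  naturality _ _ _ := by simp [imageFunctor]

theorem E_toImageFunctor_app (X : D) : E ((h.toImageFunctor α).app X) := h.E_toImage _

theorem M_fromImageFunctor_app (X : D) : M ((h.fromImageFunctor α).app X) :=
  h.M_fromImage _

theorem toImageFunctor_app_fromImageFunctor_app (X : D) :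
    (h.toImageFunctor α).app X ≫ (h.fromImageFunctor α).app X = α.app X :=
  h.toImage_fromImage (α.app X)

end imageFunctor

section monad

variable {S T : Monad C} {σ : S ⟶ T} {A : C ⥤ C} {e : (S : C ⥤ C) ⟶ A}
  {p : A ⟶ (T : C ⥤ C)}

theorem factor_app_assoc (hep : ∀ X, e.app X ≫ p.app X = σ.app X) (X : C) {Z : C}
    (k : T.obj X ⟶ Z) : e.app X ≫ p.app X ≫ k = σ.app X ≫ k := by
  rw [← Category.assoc, hep]

theorem factorMu_square (hep : ∀ X, e.app X ≫ p.app X = σ.app X) (X : C) :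
    (S.μ ≫ e).app X ≫ p.app X = (e ◫ e).app X ≫ ((p ◫ p) ≫ T.μ).app X := by
  simp [factor_app_assoc hep, ← T.map_comp_assoc, hep]

variable (h : IsOFS E M) (he : ∀ X, E (e.app X)) (hp : ∀ X, M (p.app X))
  (hep : ∀ X, e.app X ≫ p.app X = σ.app X)
  (hS : ∀ {X Y : C} (f : X ⟶ Y), E f → E (S.map f))

noncomputable def factorMu : A ⋙ A ⟶ A :=
  h.natLift (h.E_hcomp_app he he hS) hp (S.μ ≫ e) ((p ◫ p) ≫ T.μ) (factorMu_square hep)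

section

variable (X : C)

@[simp]
theorem factorMu_fac_left_assoc {Z : C} (k : A.obj X ⟶ Z) :
    e.app (S.obj X) ≫ A.map (e.app X) ≫ (h.factorMu he hp hep hS).app X ≫ k =
      S.μ.app X ≫ e.app X ≫ k := by
  simpa [factorMu] using
    h.natLift_fac_left_app_assoc (h.E_hcomp_app he he hS) hp _ _ (factorMu_square hep) X k

@[simp]
theorem factorMu_fac_right_assoc {Z : C} (k : T.obj X ⟶ Z) :
    (h.factorMu he hp hep hS).app X ≫ p.app X ≫ k =
      p.app (A.obj X) ≫ T.map (p.app X) ≫ T.μ.app X ≫ k := by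
  simpa [factorMu] using
    h.natLift_fac_right_app_assoc (h.E_hcomp_app he he hS) hp _ _ (factorMu_square hep) X k

@[simp]
theorem factorMu_fac_left :
    e.app (S.obj X) ≫ A.map (e.app X) ≫ (h.factorMu he hp hep hS).app X =
      S.μ.app X ≫ e.app X := by
  simpa using h.factorMu_fac_left_assoc he hp hep hS X (𝟙 _)

@[simp]
theorem factorMu_fac_right :
    (h.factorMu he hp hep hS).app X ≫ p.app X =
      p.app (A.obj X) ≫ T.map (p.app X) ≫ T.μ.app X := by
  simpa using h.factorMu_fac_right_assoc he hp hep hS X (𝟙 _)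

end

noncomputable def factorMonad : Monad C where
  toFunctor := A
  η := S.η ≫ e
  μ := h.factorMu he hp hep hS
  assoc X := h.hom_ext (h.E_hcomp_app (h.E_hcomp_app he he hS) he hS X) (hp _)
    (by
      have hnat := (h.factorMu he hp hep hS).naturality (e.app X)
      have hA := congrArg A.map (h.factorMu_fac_left he hp hep hS X)
      simp only [Functor.comp_map, Functor.map_comp] at hnat hA
      simp only [Functor.comp_obj, NatTrans.hcomp_app, Functor.map_comp, Category.assoc,
        reassoc_of% hA, reassoc_of% hnat, factorMu_fac_left_assoc, factorMu_fac_left]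
      rw [← e.naturality_assoc, h.factorMu_fac_left, ← Category.assoc, S.assoc, Category.assoc])
    (by
      have hT := congrArg T.map (h.factorMu_fac_right he hp hep hS X)
      simp only [Functor.map_comp] at hT
      simp [reassoc_of% hT, T.assoc, T.mu_naturality_assoc])
  left_unit X := h.hom_ext (he _) (hp _)
    (by simp [Monad.unit_naturality_assoc])
    (by simp [factor_app_assoc hep, ← T.unit_naturality_assoc])
  right_unit X := h.hom_ext (he _) (hp _)
    (by rw [← e.naturality_assoc]; simp)
    (by simp [hep, -Functor.map_comp, ← Functor.map_comp_assoc])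

noncomputable def toFactorMonad : S ⟶ h.factorMonad he hp hep hS where
  toNatTrans := e
  app_η _ := rfl
  app_μ _ := by simp [factorMonad]

noncomputable def fromFactorMonad : h.factorMonad he hp hep hS ⟶ T where
  toNatTrans := p
  app_η _ := by simp [factorMonad, hep]
  app_μ _ := by simp [factorMonad]

theorem toFactorMonad_comp_fromFactorMonad :
    h.toFactorMonad he hp hep hS ≫ h.fromFactorMonad he hp hep hS = σ :=
  MonadHom.ext' _ _ (funext hep)

end monad

end IsOFS

/-- Factorisation of a monad morphism through a monad, with the middle monad again
compatible with the factorisation system. -/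
theorem monad_factorisation {C : Type u} [Category.{v} C]
    (E M : MorphismProperty C) (hOFS : IsOFS E M)
    (S T : Monad C) (m : S ⟶ T)
    (hS : ∀ {X Y : C} (f : X ⟶ Y), E f → E (S.map f)) :
    ∃ (S' : Monad C) (e : S ⟶ S') (m' : S' ⟶ T),
      e ≫ m' = m ∧
      (∀ X : C, E (e.app X)) ∧
      (∀ X : C, M (m'.app X)) ∧
      (∀ {X Y : C} (f : X ⟶ Y), E f → E (S'.map f)) := by
  have he := hOFS.E_toImageFunctor_app m.toNatTrans
  have hp := hOFS.M_fromImageFunctor_app m.toNatTrans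
  have hep := hOFS.toImageFunctor_app_fromImageFunctor_app m.toNatTrans
  exact ⟨hOFS.factorMonad he hp hep hS, hOFS.toFactorMonad he hp hep _,
    hOFS.fromFactorMonad he hp hep _, hOFS.toFactorMonad_comp_fromFactorMonad he hp hep _,
    he, hp, fun _ hf => hOFS.E_map_of_E_app he hS hf⟩
end

section
/- Let C be a cartesian closed category and (E, M) an orthogonal factorisation system on C such that E is closed under binary products, i.e. for all e₁ : A₁ → B₁ and e₂ : A₂ → B₂ in E, the product morphism e₁ × e₂ : A₁ × A₂ → B₁ × B₂ is in E. Then for every object X of C and every morphism m' : X' → Y' in M, the induced morphism on exponentials (X ⇒ X') → (X ⇒ Y') (the action of the exponential functor (X ⇒ −) on m') is in M. -/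
/-!
Transpose lifting problems along the adjunction `X ⊗ (−) ⊣ (X ⇒ −)`: a square from `e ∈ E`
to `(X ⇒ −).map m'` corresponds to a square from `X ◁ e` to `m'`, and `X ◁ e = 𝟙 X ⊗ e ∈ E`.
So `(X ⇒ −).map m'` has the unique right lifting property against `E`, and in an orthogonal
factorisation system this characterises `M`.
-/

open CategoryTheory MonoidalCategory

universe v u

universe v' u'

section

variable {C : Type u} [Category.{v} C]

def UniqueRightLifting (E : MorphismProperty C) {P Q : C} (p : P ⟶ Q) : Prop :=
  ∀ ⦃A B : C⦄ (e : A ⟶ B), E e → ∀ (u : A ⟶ P) (v : B ⟶ Q), u ≫ p = e ≫ v →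
    ∃! h : B ⟶ P, e ≫ h = u ∧ h ≫ p = v

namespace IsOFS

variable {E M : MorphismProperty C}

theorem uniqueRightLifting_of_M (hOFS : IsOFS E M) {P Q : C} {p : P ⟶ Q} (hp : M p) :
    UniqueRightLifting E p :=
  fun _ _ e he u v hsq => hOFS.fillin e p u v he hp hsq

theorem mem_M_of_uniqueRightLifting (hOFS : IsOFS E M) {P Q : C} {p : P ⟶ Q}
    (hp : UniqueRightLifting E p) : M p := by
  obtain ⟨I, e, m, he, hm, rfl⟩ := hOFS.exists_fac p
  obtain ⟨r, ⟨her, hrp⟩, -⟩ := hp e he (𝟙 P) m (Category.id_comp _)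
  -- `r ≫ e` and `𝟙 I` both solve the lifting problem of `e` against `m` given by `(e, m)`.
  have hre : r ≫ e = 𝟙 I := by
    obtain ⟨_, -, huniq⟩ := hOFS.fillin e m e m he hm rfl
    rw [huniq (r ≫ e) ⟨by rw [← Category.assoc, her, Category.id_comp],
      by rw [Category.assoc, hrp]⟩, huniq (𝟙 I) ⟨Category.comp_id _, Category.id_comp _⟩]
  have : IsIso e := ⟨r, her, hre⟩
  exact hOFS.comp_M e m (hOFS.iso_M e this) hm

end IsOFS

theorem CategoryTheory.Adjunction.uniqueRightLifting_map {D : Type u'} [Category.{v'} D]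
    {F : C ⥤ D} {G : D ⥤ C} (adj : F ⊣ G) {E : MorphismProperty C} {E' : MorphismProperty D}
    (hF : ∀ ⦃A B : C⦄ (e : A ⟶ B), E e → E' (F.map e)) {P Q : D} {p : P ⟶ Q}
    (hp : UniqueRightLifting E' p) : UniqueRightLifting E (G.map p) := by
  intro A B e he u v hsq
  have hsq' : (adj.homEquiv A P).symm u ≫ p = F.map e ≫ (adj.homEquiv B Q).symm v :=
    ((adj.homEquiv_naturality_right_square_iff e v u p).2 hsq.symm).symm
  refine ((adj.homEquiv B P).existsUnique_congr fun h => ?_).1 (hp _ (hF e he) _ _ hsq')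
  rw [← adj.homEquiv_naturality_left, ← adj.homEquiv_naturality_right,
    ← Equiv.eq_symm_apply, ← Equiv.eq_symm_apply]

end

/-- If the left class `E` of a factorisation system on a cartesian closed category is
closed under binary products, then exponentiation `X ⇒ (−)` preserves the right
class `M`. -/
theorem exp_preserves_M {C : Type u} [Category.{v} C]
    [CartesianMonoidalCategory C] [MonoidalClosed C]
    (E M : MorphismProperty C) (hOFS : IsOFS E M)
    (hE_prod : ∀ {A₁ B₁ A₂ B₂ : C} (e₁ : A₁ ⟶ B₁) (e₂ : A₂ ⟶ B₂),
      E e₁ → E e₂ → E (e₁ ⊗ₘ e₂))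
    (X : C) {X' Y' : C} (m' : X' ⟶ Y') (hm' : M m') :
    M ((ihom X).map m') := by
  have hE_whisker : ∀ ⦃A B : C⦄ (e : A ⟶ B), E e → E ((tensorLeft X).map e) := by
    intro A B e he
    change E (X ◁ e)
    rw [← id_tensorHom]
    exact hE_prod (𝟙 X) e (hOFS.iso_E _ inferInstance) he
  exact hOFS.mem_M_of_uniqueRightLifting
    ((ihom.adjunction X).uniqueRightLifting_map hE_whisker (hOFS.uniqueRightLifting_of_M hm'))
end

section
/- (Meseguer's diagonal fill-in for ωCPOs.) Let W, X, Y, Z be ω-complete partial orders. Let e : W → X be a dense ωScott-continuous map, m : Y → Z a full ωScott-continuous map, and f : W → Y, g : X → Z ωScott-continuous maps with m ∘ f = g ∘ e. Then there exists a unique ωScott-continuous map h : X → Y such that h ∘ e = f and m ∘ h = g. -/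
/-!
The set of `x` with `g x` in the range of `m` is ω-chain-closed, since a full map reflects the
order and so lifts ω-chains in its range to ω-chains. By the commuting square it contains the
image of `e`, so by density it is all of `X`. Choosing preimages gives `h` with `m ∘ h = g`; a full
map is injective, so `h` inherits ωScott-continuity from `g`, and both `h ∘ e = f` and uniqueness
follow by cancelling `m`.
-/

open OmegaCompletePartialOrder

/-- A subset of an ωcpo is ω-chain-closed when it is closed under least upper bounds of
ω-chains contained in it. -/
def ChainClosed {α : Type*} [OmegaCompletePartialOrder α] (U : Set α) : Prop :=
  ∀ c : Chain α, (∀ n : ℕ, c n ∈ U) → ωSup c ∈ U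

/-- An ωScott-continuous map is dense when the only ω-chain-closed subset of its codomain
containing its image is the whole codomain. -/
def IsDenseMap {α β : Type*} [OmegaCompletePartialOrder α] [OmegaCompletePartialOrder β]
    (e : α →𝒄 β) : Prop :=
  ∀ U : Set β, ChainClosed U → Set.range e ⊆ U → U = Set.univ

/-- An ωScott-continuous map is full when it reflects the order. -/
def IsFullMap {α β : Type*} [OmegaCompletePartialOrder α] [OmegaCompletePartialOrder β]
    (m : α →𝒄 β) : Prop :=
  ∀ x x' : α, m x ≤ m x' → x ≤ x'

section

variable {α β γ : Type*} [OmegaCompletePartialOrder α] [OmegaCompletePartialOrder β]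
  [OmegaCompletePartialOrder γ]

theorem ChainClosed.preimage {U : Set β} (hU : ChainClosed U) (g : α →𝒄 β) :
    ChainClosed (g ⁻¹' U) := by
  intro c hc
  rw [Set.mem_preimage, g.ωScottContinuous.map_ωSup]
  exact hU _ hc

theorem IsDenseMap.forall_mem {e : α →𝒄 β} (he : IsDenseMap e) {U : Set β}
    (hU : ChainClosed U) (hrange : ∀ a, e a ∈ U) (b : β) : b ∈ U := by
  rw [he U hU (Set.range_subset_iff.mpr hrange)]
  trivial

namespace IsFullMap

variable {m : β →𝒄 γ} (hm : IsFullMap m)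
include hm

theorem injective : Function.Injective m := fun _ _ h =>
  le_antisymm (hm _ _ h.le) (hm _ _ h.ge)

theorem chainClosed_range : ChainClosed (Set.range m) := by
  intro c hc
  choose y hy using hc
  have hy_mono : Monotone y := fun i j hij => hm _ _ (by rw [hy, hy]; exact c.monotone hij)
  refine ⟨ωSup ⟨y, hy_mono⟩, ?_⟩
  rw [m.ωScottContinuous.map_ωSup]
  congr
  ext n
  exact hy n

theorem ωScottContinuous_of_comp {h : α → β} (hmh : ωScottContinuous (m ∘ h)) :
    ωScottContinuous h := by
  have h_mono : Monotone h := fun a b hab => hm _ _ (hmh.monotone hab)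
  refine ωScottContinuous.of_monotone_map_ωSup ⟨h_mono, fun c => hm.injective ?_⟩
  calc m (h (ωSup c)) = (m ∘ h) (ωSup c) := rfl
    _ = ωSup (c.map ⟨m ∘ h, hmh.monotone⟩) := hmh.map_ωSup c
    _ = m (ωSup (c.map ⟨h, h_mono⟩)) := (m.ωScottContinuous.map_ωSup (c.map ⟨h, h_mono⟩)).symm

noncomputable def lift (g : α →𝒄 γ) (hg : ∀ a, g a ∈ Set.range m) : α →𝒄 β :=
  .ofFun (fun a => (hg a).choose) <| hm.ωScottContinuous_of_comp <| by
    convert g.ωScottContinuous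
    ext a
    exact (hg a).choose_spec

theorem lift_spec (g : α →𝒄 γ) (hg : ∀ a, g a ∈ Set.range m) (a : α) :
    m (hm.lift g hg a) = g a :=
  (hg a).choose_spec

end IsFullMap

end

/-- Meseguer's diagonal fill-in property for the (dense, full) factorisation system on
ω-complete partial orders. -/
theorem omegaCPO_diagonal_fillin
    {W X Y Z : Type*}
    [OmegaCompletePartialOrder W] [OmegaCompletePartialOrder X]
    [OmegaCompletePartialOrder Y] [OmegaCompletePartialOrder Z]
    (e : W →𝒄 X) (m : Y →𝒄 Z) (f : W →𝒄 Y) (g : X →𝒄 Z)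
    (he : IsDenseMap e) (hm : IsFullMap m)
    (hsq : ∀ w : W, m (f w) = g (e w)) :
    ∃! h : X →𝒄 Y, (∀ w : W, h (e w) = f w) ∧ (∀ x : X, m (h x) = g x) := by
  have hg : ∀ x, g x ∈ Set.range m :=
    he.forall_mem (hm.chainClosed_range.preimage g) fun w => ⟨f w, hsq w⟩
  refine ⟨hm.lift g hg, ⟨fun w => hm.injective ?_, hm.lift_spec g hg⟩, ?_⟩
  · rw [hm.lift_spec, hsq]
  · rintro h ⟨-, hmh⟩
    ext x
    exact hm.injective (by rw [hmh, hm.lift_spec])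
end

section
/- (Existence of (dense, full) factorisations in ωCPO.) Let X and Y be ω-complete partial orders and f : X → Y an ωScott-continuous map. Let Z ⊆ Y be the intersection of all ω-chain-closed subsets of Y containing the image of f. Then: Z is ω-chain-closed (hence Z, with the inherited order, is an ωcpo whose ω-chain suprema agree with those of Y); the inclusion Z → Y is ωScott-continuous and full; the corestriction f' : X → Z of f is ωScott-continuous and dense; and f equals the inclusion composed with f'. -/
open OmegaCompletePartialOrder

/-!
The ω-chain-closed subsets of `Y` are closed under intersections, so `Z` is the least
ω-chain-closed set containing the image of `f`, and the inclusion of `Z` is full because `Z`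
carries the inherited order. For density, an ω-chain-closed `U ⊆ Z` containing the image of the
corestriction is, as a subset of `Y`, again ω-chain-closed (suprema in `Z` are computed in `Y`),
so it contains `Z` by minimality.
-/

open Set

section

variable {α β : Type*} [OmegaCompletePartialOrder α] [OmegaCompletePartialOrder β]

theorem ChainClosed.sInter {S : Set (Set α)} (hS : ∀ U ∈ S, ChainClosed U) :
    ChainClosed (⋂₀ S) :=
  fun c hc U hU => hS U hU c fun n => hc n U hU

def chainClosure (s : Set α) : Set α :=
  ⋂₀ {U | ChainClosed U ∧ s ⊆ U}

theorem chainClosed_chainClosure (s : Set α) : ChainClosed (chainClosure s) :=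
  ChainClosed.sInter fun _ hU => hU.1

theorem subset_chainClosure (s : Set α) : s ⊆ chainClosure s :=
  subset_sInter fun _ hU => hU.2

theorem chainClosure_subset {s U : Set α} (hU : ChainClosed U) (hsU : s ⊆ U) :
    chainClosure s ⊆ U :=
  sInter_subset_of_mem ⟨hU, hsU⟩

namespace ChainClosed

variable {Z : Set α}

abbrev omegaCompletePartialOrder (hZ : ChainClosed Z) : OmegaCompletePartialOrder Z :=
  OmegaCompletePartialOrder.subtype (· ∈ Z) fun c h => hZ c fun n => h (c n) ⟨n, rfl⟩

def subtypeVal (hZ : ChainClosed Z) :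
    letI := hZ.omegaCompletePartialOrder
    Z →𝒄 α :=
  letI := hZ.omegaCompletePartialOrder
  ⟨OrderHom.Subtype.val (· ∈ Z), fun _ => rfl⟩

theorem isFullMap_subtypeVal (hZ : ChainClosed Z) :
    letI := hZ.omegaCompletePartialOrder
    IsFullMap hZ.subtypeVal :=
  fun _ _ h => h

theorem image_val (hZ : ChainClosed Z) {U : Set Z}
    (hU : letI := hZ.omegaCompletePartialOrder; ChainClosed U) :
    ChainClosed (Subtype.val '' U) := by
  intro c hc
  simp only [Subtype.coe_image, mem_ofPred_eq] at hc ⊢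
  choose hcZ hcU using hc
  exact ⟨_, hU ⟨fun n => ⟨c n, hcZ n⟩, fun _ _ h => c.monotone h⟩ hcU⟩

end ChainClosed

namespace OmegaCompletePartialOrder.ContinuousHom

variable {Z : Set α}

def codRestrict (f : β →𝒄 α) (hZ : ChainClosed Z) (hf : ∀ x, f x ∈ Z) :
    letI := hZ.omegaCompletePartialOrder
    β →𝒄 Z :=
  letI := hZ.omegaCompletePartialOrder
  ⟨⟨fun x => ⟨f x, hf x⟩, fun _ _ h => f.monotone h⟩, fun c => Subtype.ext (f.map_ωSup' c)⟩

theorem isDenseMap_codRestrict (f : β →𝒄 α) (hZ : ChainClosed Z) (hf : ∀ x, f x ∈ Z)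
    (hZf : Z ⊆ chainClosure (range f)) :
    letI := hZ.omegaCompletePartialOrder
    IsDenseMap (f.codRestrict hZ hf) := by
  intro U hU hfU
  have hZU : chainClosure (range f) ⊆ Subtype.val '' U :=
    chainClosure_subset (hZ.image_val hU) <| by
      rintro _ ⟨x, rfl⟩
      exact ⟨_, hfU ⟨x, rfl⟩, rfl⟩
  refine eq_univ_of_forall fun z => ?_
  obtain ⟨u, hu, huz⟩ := hZU (hZf z.2)
  rwa [← Subtype.ext huz]

end OmegaCompletePartialOrder.ContinuousHom

end

/-- Existence of (dense, full) factorisations in ωCPO: the intersection `Z` of all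
ω-chain-closed subsets of `Y` containing the image of `f` is ω-chain-closed, hence an
ωcpo under the inherited order whose ω-chain suprema agree with those of `Y`; the
inclusion `Z → Y` is ωScott-continuous and full, the corestriction `f' : X → Z` of `f`
is ωScott-continuous and dense, and `f` equals the inclusion composed with `f'`. -/
theorem omegaCPO_dense_full_factorisation
    {X Y : Type*} [OmegaCompletePartialOrder X] [OmegaCompletePartialOrder Y]
    (f : X →𝒄 Y) (Z : Set Y)
    (hZ : Z = ⋂₀ {U : Set Y | ChainClosed U ∧ Set.range f ⊆ U}) :
    ∃ hZc : ChainClosed Z,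
      letI : OmegaCompletePartialOrder {y : Y // y ∈ Z} :=
        OmegaCompletePartialOrder.subtype (· ∈ Z)
          (fun c h => hZc c fun n => h (c n) ⟨n, rfl⟩)
      ∃ (f' : X →𝒄 {y : Y // y ∈ Z}) (incl : {y : Y // y ∈ Z} →𝒄 Y),
        (∀ z : {y : Y // y ∈ Z}, incl z = (z : Y)) ∧
        (∀ c : Chain {y : Y // y ∈ Z},
          ((ωSup c : {y : Y // y ∈ Z}) : Y) = ωSup (c.map (OrderHom.Subtype.val (· ∈ Z)))) ∧
        IsFullMap incl ∧
        IsDenseMap f' ∧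
        (∀ x : X, incl (f' x) = f x) := by
  change Z = chainClosure (range f) at hZ
  subst hZ
  have hZc := chainClosed_chainClosure (range f)
  have hf : ∀ x, f x ∈ chainClosure (range f) := fun x => subset_chainClosure _ ⟨x, rfl⟩
  exact ⟨hZc, f.codRestrict hZc hf, hZc.subtypeVal, fun _ => rfl, fun _ => rfl,
    hZc.isFullMap_subtypeVal, f.isDenseMap_codRestrict hZc hf subset_rfl, fun _ => rfl⟩
end

section
/- (Accessibility of signature functors on Set.) Let ι be a type and let A, B : ι → Type u be families of types, and let F : Type u → Type u be the functor F(X) = Σ (i : ι), A i × (B i → X), acting on functions in the evident way. Let κ be a regular cardinal such that the cardinality of B i is strictly less than κ for every i : ι. Then F preserves colimits of all κ-filtered diagrams in Type u. -/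
open CategoryTheory Limits

universe u

/-- The signature functor `X ↦ Σ i, A i × (B i → X)` of an effect signature. -/
def sigFunctor (ι : Type u) (A B : ι → Type u) : Type u ⥤ Type u where
  obj X := Σ i : ι, A i × (B i → X)
  map f := TypeCat.ofHom fun p => ⟨p.1, p.2.1, ⇑f ∘ p.2.2⟩
  map_id X := rfl
  map_comp f g := rfl

/-- A category `J` is `κ`-filtered when every diagram in `J` of size `< κ` admits a
cocone. -/
def IsCardinalFiltered (J : Type u) [SmallCategory J] (κ : Cardinal.{u}) : Prop :=
  ∀ (K : Type u) (_ : SmallCategory K) (F : K ⥤ J),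
    Cardinal.mk (Σ X Y : K, X ⟶ Y) < κ → Nonempty (Cocone F)


/-!
A type `B` with `#B < κ` is `κ`-presentable in `Type u`, so along a `κ`-filtered colimit
every map `B → colim D` factors through some `D j`, and two such factorizations agree
after a further transition map. An element of `sigFunctor ι A B` is a tag, a constant and
such a map, so the elementwise criterion for filtered colimits of types transfers directly.
-/

lemma IsCardinalFiltered.toClass {J : Type u} [SmallCategory J] {κ : Cardinal.{u}}
    [Fact κ.IsRegular] (hJ : _root_.IsCardinalFiltered J κ) :
    CategoryTheory.IsCardinalFiltered J κ where
  nonempty_cocone F hA := hJ _ _ F <| by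
    rwa [hasCardinalLT_iff_of_equiv (Arrow.equivSigma _), hasCardinalLT_iff_cardinal_mk_lt] at hA

section

variable {J : Type u} [SmallCategory J] {D : J ⥤ Type u} {c : Cocone D} {B : Type u}
  [PreservesColimit D (coyoneda.obj (Opposite.op B))]

lemma exists_comp_eq_of_isColimit (hc : IsColimit c) (g : B → c.pt) :
    ∃ (j : J) (g' : B → D.obj j), c.ι.app j ∘ g' = g := by
  obtain ⟨j, g', h⟩ := Types.jointly_surjective_of_isColimit
    (isColimitOfPreserves (coyoneda.obj (Opposite.op B)) hc) (TypeCat.ofHom g)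
  exact ⟨j, TypeCat.homEquiv (show B ⟶ D.obj j from g'), congrArg TypeCat.homEquiv h⟩

lemma exists_map_comp_eq_of_isColimit [IsFilteredOrEmpty J] (hc : IsColimit c) {j : J}
    (g g' : B → D.obj j) (h : c.ι.app j ∘ g = c.ι.app j ∘ g') :
    ∃ (k : J) (f : j ⟶ k), D.map f ∘ g = D.map f ∘ g' := by
  obtain ⟨k, f, hf⟩ := (Types.FilteredColimit.isColimit_eq_iff'
    (isColimitOfPreserves (coyoneda.obj (Opposite.op B)) hc)
    (TypeCat.ofHom g) (TypeCat.ofHom g')).mp (congrArg TypeCat.homEquiv.symm h)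
  exact ⟨k, f, congrArg TypeCat.homEquiv hf⟩

end

lemma sigFunctor_preservesColimitsOfShape {ι : Type u} {A B : ι → Type u} {J : Type u}
    [SmallCategory J] [IsFilteredOrEmpty J]
    [∀ i, PreservesColimitsOfShape J (coyoneda.obj (Opposite.op (B i)))] :
    PreservesColimitsOfShape J (sigFunctor ι A B) := by
  refine ⟨fun {D} => ⟨fun {c} hc => ⟨Types.FilteredColimit.isColimitOf' _ _ ?_ ?_⟩⟩⟩
  · rintro ⟨i, a, g⟩
    obtain ⟨j, g', rfl⟩ := exists_comp_eq_of_isColimit hc g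
    exact ⟨j, ⟨i, a, g'⟩, rfl⟩
  · rintro j ⟨i, a, g⟩ ⟨i', a', g'⟩ h
    obtain ⟨rfl, h⟩ := Sigma.mk.inj_iff.mp h
    obtain ⟨rfl, h⟩ := Prod.ext_iff.mp (eq_of_heq h)
    obtain ⟨k, f, hf⟩ := exists_map_comp_eq_of_isColimit hc g g' h
    exact ⟨k, f, congrArg (fun g => (⟨i, a, g⟩ : Σ i, A i × (B i → D.obj k))) hf⟩

/-- If `κ` is a regular cardinal bounding the arities `B i`, the signature functor
preserves colimits of `κ`-filtered diagrams in `Type u`. -/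
theorem sigFunctor_preservesColimitsOfShape_of_isCardinalFiltered
    (ι : Type u) (A B : ι → Type u) (κ : Cardinal.{u}) (hκ : κ.IsRegular)
    (hB : ∀ i : ι, Cardinal.mk (B i) < κ)
    (J : Type u) [SmallCategory J] (hJ : IsCardinalFiltered J κ) :
    PreservesColimitsOfShape J (sigFunctor ι A B) := by
  have : Fact κ.IsRegular := ⟨hκ⟩
  have := hJ.toClass
  have := isFiltered_of_isCardinalFiltered J κ
  have (i : ι) : IsCardinalPresentable (B i) κ :=
    ((hasCardinalLT_iff_cardinal_mk_lt _ _).mpr (hB i)).isCardinalPresentable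
  have (i : ι) := preservesColimitsOfShape_of_isCardinalPresentable (B i) κ J
  exact sigFunctor_preservesColimitsOfShape
end

section
/- (Transfer of algebraic structure to the factorised monad.) Let (E, M) be an orthogonal factorisation system on a category C and let F : C → C be a functor such that E is closed under F. Let S and T be monads on C with E closed under S, let m : S → T be a monad morphism, and suppose m factors as m = m' ∘ e where e : S → S' and m' : S' → T are monad morphisms with every component of e in E and every component of m' in M. Let β : F∘S → S and β' : F∘T → T be natural transformations (componentwise β_X : F(S X) → S X and β'_X : F(T X) → T X) satisfying the compatibility m_X ∘ β_X = β'_X ∘ F(m_X) for every object X. Then there exists a unique natural transformation β'' : F∘S' → S' such that e_X ∘ β_X = β''_X ∘ F(e_X) and m'_X ∘ β''_X = β'_X ∘ F(m'_X) for every object X. -/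
/-!
Componentwise, `β''` is the unique diagonal of the square with `F.map (e.app X) ∈ E` on the
left, `m'.app X ∈ M` on the right, `β.app X ≫ e.app X` on top and `F.map (m'.app X) ≫ β'.app X`
at the bottom; it commutes by `hcompat` and `m = e ≫ m'`.
-/

open CategoryTheory

universe v u

namespace IsOFS

variable {C : Type u} [Category.{v} C] {E M : MorphismProperty C}

/-- Componentwise unique fill-ins of a square of natural transformations are natural, because
both ways round a naturality square fill in the same square of `C`. -/
theorem existsUnique_natTrans_fillin (hOFS : IsOFS E M) {D : Type*} [Category D]
    {P Q R S : D ⥤ C} (u : P ⟶ Q) (v : R ⟶ S) (f : P ⟶ R) (g : Q ⟶ S)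
    (hu : ∀ X, E (u.app X)) (hv : ∀ X, M (v.app X)) (sq : f ≫ v = u ≫ g) :
    ∃! h : Q ⟶ R, u ≫ h = f ∧ h ≫ v = g := by
  have sq_app (X : D) : f.app X ≫ v.app X = u.app X ≫ g.app X := NatTrans.congr_app sq X
  choose h hfill huniq using fun X =>
    hOFS.fillin (u.app X) (v.app X) (f.app X) (g.app X) (hu X) (hv X) (sq_app X)
  have naturality : ∀ {X Y : D} (φ : X ⟶ Y), Q.map φ ≫ h Y = h X ≫ R.map φ := by
    intro X Y φ
    have sqφ : (f.app X ≫ R.map φ) ≫ v.app Y = u.app X ≫ g.app X ≫ S.map φ := by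
      rw [Category.assoc, v.naturality, reassoc_of% sq_app X]
    refine (hOFS.fillin (u.app X) (v.app Y) _ _ (hu X) (hv Y) sqφ).unique ⟨?_, ?_⟩ ⟨?_, ?_⟩
    · rw [← Category.assoc, ← u.naturality, Category.assoc, (hfill Y).1, f.naturality]
    · rw [Category.assoc, (hfill Y).2, g.naturality]
    · rw [← Category.assoc, (hfill X).1]
    · rw [Category.assoc, v.naturality, reassoc_of% (hfill X).2]
  refine ⟨⟨h, fun _ _ φ => naturality φ⟩, ⟨?_, ?_⟩, fun h' ⟨hu', hv'⟩ => ?_⟩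
  · ext X; exact (hfill X).1
  · ext X; exact (hfill X).2
  · ext X; exact huniq X _ ⟨NatTrans.congr_app hu' X, NatTrans.congr_app hv' X⟩

end IsOFS

theorem transfer_algebraic_structure_general {C : Type u} [Category.{v} C]
    (E M : MorphismProperty C) (hOFS : IsOFS E M)
    (F : C ⥤ C) (hF : ∀ {X Y : C} (f : X ⟶ Y), E f → E (F.map f))
    (S T : Monad C)
    (m : S ⟶ T)
    (S' : Monad C) (e : S ⟶ S') (m' : S' ⟶ T)
    (hfac : e ≫ m' = m) (he : ∀ X : C, E (e.app X)) (hm' : ∀ X : C, M (m'.app X))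
    (β : S.toFunctor ⋙ F ⟶ S.toFunctor) (β' : T.toFunctor ⋙ F ⟶ T.toFunctor)
    (hcompat : ∀ X : C, β.app X ≫ m.app X = F.map (m.app X) ≫ β'.app X) :
    ∃! β'' : S'.toFunctor ⋙ F ⟶ S'.toFunctor,
      (∀ X : C, β.app X ≫ e.app X = F.map (e.app X) ≫ β''.app X) ∧
      (∀ X : C, β''.app X ≫ m'.app X = F.map (m'.app X) ≫ β'.app X) := by
  have sq : (β ≫ e.toNatTrans) ≫ m'.toNatTrans =
      Functor.whiskerRight e.toNatTrans F ≫ Functor.whiskerRight m'.toNatTrans F ≫ β' := by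
    ext X
    simpa [← hfac] using hcompat X
  refine (existsUnique_congr fun β'' => ?_).mp
    (hOFS.existsUnique_natTrans_fillin _ _ _ _ (fun X => hF _ (he X)) hm' sq)
  simp only [NatTrans.ext'_iff, funext_iff, NatTrans.comp_app, Functor.whiskerRight_app]
  exact and_congr (forall_congr' fun _ => eq_comm) Iff.rfl

/-- Transfer of algebraic structure (an `F`-algebra structure on the monads, i.e.
interpretations of algebraic operations) to the middle monad of the factorisation of a
monad morphism. -/
theorem transfer_algebraic_structure {C : Type u} [Category.{v} C]
    (E M : MorphismProperty C) (hOFS : IsOFS E M)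
    (F : C ⥤ C) (hF : ∀ {X Y : C} (f : X ⟶ Y), E f → E (F.map f))
    (S T : Monad C) (hS : ∀ {X Y : C} (f : X ⟶ Y), E f → E (S.map f))
    (m : S ⟶ T)
    (S' : Monad C) (e : S ⟶ S') (m' : S' ⟶ T)
    (hfac : e ≫ m' = m) (he : ∀ X : C, E (e.app X)) (hm' : ∀ X : C, M (m'.app X))
    (β : S.toFunctor ⋙ F ⟶ S.toFunctor) (β' : T.toFunctor ⋙ F ⟶ T.toFunctor)
    (hcompat : ∀ X : C, β.app X ≫ m.app X = F.map (m.app X) ≫ β'.app X) :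
    ∃! β'' : S'.toFunctor ⋙ F ⟶ S'.toFunctor,
      (∀ X : C, β.app X ≫ e.app X = F.map (e.app X) ≫ β''.app X) ∧
      (∀ X : C, β''.app X ≫ m'.app X = F.map (m'.app X) ≫ β'.app X) :=
  transfer_algebraic_structure_general E M hOFS F hF S T m S' e m' hfac he hm' β β' hcompat
end
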